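/- arXiv:cs/0501045 — 5 statements merged into one kernel-verified Lean document; each statement's English description precedes it below -/
import Mathlib

section
/- If a sequence over an alphabet of r symbols has no two consecutive entries equal and contains no (not necessarily contiguous) subsequence of the form a…b…a…b with a ≠ b, then the sequence has length at most 2r - 1. -/
open Finset

private lemma ds_sub {α : Type*} {m n : ℕ} (s : Fin n → α) (e : Fin m → Fin n)
    (he : ∀ {a b : Fin m}, a < b → e a < e b)
    (hds : ¬ ∃ i j k l : Fin n, i < j ∧ j < k ∧ k < l ∧
      s i = s k ∧ s j = s l ∧ s i ≠ s j) :
    ¬ ∃ i j k l : Fin m, i < j ∧ j < k ∧ k < l ∧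
      s (e i) = s (e k) ∧ s (e j) = s (e l) ∧ s (e i) ≠ s (e j) := by
  rintro ⟨i, j, k, l, h1, h2, h3, h4, h5, h6⟩
  exact hds ⟨e i, e j, e k, e l, he h1, he h2, he h3, h4, h5, h6⟩

private lemma ds_key {α : Type*} [DecidableEq α] (n : ℕ) :
    ∀ s : Fin n → α,
    (∀ i : Fin n, ∀ h : i.val + 1 < n, s i ≠ s ⟨i.val + 1, h⟩) →
    (¬ ∃ i j k l : Fin n, i < j ∧ j < k ∧ k < l ∧
      s i = s k ∧ s j = s l ∧ s i ≠ s j) →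
    n ≤ 2 * (Finset.univ.image s).card - 1 := by
  induction n using Nat.strong_induction_on with
  | _ n IH =>
  intro s hadj hds
  rcases Nat.eq_zero_or_pos n with hn0 | hn0
  · omega
  have hlastlt : n - 1 < n := by omega
  set last : Fin n := ⟨n - 1, hlastlt⟩ with hlast
  set a := s last with ha
  have hc1 : 1 ≤ (Finset.univ.image s).card :=
    Finset.card_pos.mpr ⟨a, Finset.mem_image_of_mem s (Finset.mem_univ last)⟩
  set S : Finset (Fin n) := Finset.univ.filter (fun j => j.val < n - 1 ∧ s j = a) with hS
  by_cases hSne : S.Nonempty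
  · -- a occurs before position n-1; let i be its last such occurrence
    set i := S.max' hSne with hi
    have hiS : i ∈ S := S.max'_mem hSne
    rw [hS, Finset.mem_filter] at hiS
    obtain ⟨-, hilt, hia⟩ := hiS
    have hmax : ∀ j : Fin n, j.val < n - 1 → s j = a → j ≤ i := by
      intro j h1 h2
      exact S.le_max' j (by rw [hS, Finset.mem_filter]; exact ⟨Finset.mem_univ _, h1, h2⟩)
    -- i+1 ≠ n-1, else adjacent equal a's
    have hi2 : i.val + 1 < n - 1 := by
      rcases Nat.lt_or_ge (i.val + 1) (n - 1) with h | h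
      · exact h
      · exfalso
        have hieq : i.val + 1 = n - 1 := by omega
        exact hadj i (by omega) (by
          rw [hia, ha]; exact congrArg s (Fin.ext hieq.symm))
    set p := i.val + 1 with hp
    set m := n - 1 - p with hm
    have hmpos : 1 ≤ m := by omega
    -- prefix
    set ep : Fin p → Fin n := fun k => ⟨k.val, by omega⟩ with hep
    have hepmono : ∀ {x y : Fin p}, x < y → ep x < ep y := by
      intro x y h; exact h
    have hadjp : ∀ k : Fin p, ∀ h : k.val + 1 < p, (s ∘ ep) k ≠ (s ∘ ep) ⟨k.val + 1, h⟩ := by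
      intro k h
      exact hadj ⟨k.val, by omega⟩ (show k.val + 1 < n by omega)
    have hdsp := ds_sub s ep (fun {x y} h => hepmono h) hds
    have IHp := IH p (by omega) (s ∘ ep) hadjp (by
      rintro ⟨x, y, z, w, h1, h2, h3, h4, h5, h6⟩
      exact hdsp ⟨x, y, z, w, h1, h2, h3, h4, h5, h6⟩)
    -- interior
    set et : Fin m → Fin n := fun k => ⟨p + k.val, by omega⟩ with het
    have hetmono : ∀ {x y : Fin m}, x < y → et x < et y := by
      intro x y h
      simp only [het, Fin.mk_lt_mk]
      omega
    have hadjt : ∀ k : Fin m, ∀ h : k.val + 1 < m, (s ∘ et) k ≠ (s ∘ et) ⟨k.val + 1, h⟩ := by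
      intro k h
      exact hadj ⟨p + k.val, by omega⟩ (show p + k.val + 1 < n by omega)
    have hdst := ds_sub s et (fun {x y} h => hetmono h) hds
    have IHt := IH m (by omega) (s ∘ et) hadjt (by
      rintro ⟨x, y, z, w, h1, h2, h3, h4, h5, h6⟩
      exact hdst ⟨x, y, z, w, h1, h2, h3, h4, h5, h6⟩)
    -- a does not appear in the interior
    have hanot : ∀ k : Fin m, s (et k) ≠ a := by
      intro k hk
      have h1 := hmax (et k) (show p + k.val < n - 1 by omega) hk
      have h2 : p + k.val ≤ i.val := h1
      omega
    -- disjointness of prefix and interior images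
    have hdisj : Disjoint (Finset.univ.image (s ∘ ep)) (Finset.univ.image (s ∘ et)) := by
      rw [Finset.disjoint_left]
      rintro b hb1 hb2
      rw [Finset.mem_image] at hb1 hb2
      obtain ⟨q, -, hq⟩ := hb1
      obtain ⟨k, -, hk⟩ := hb2
      simp only [Function.comp_apply] at hq hk
      have hba : b ≠ a := fun h => hanot k (by rw [← hk] at h; exact h)
      -- q.val < i.val, since s at i is a ≠ b
      have hq_lt : q.val < i.val := by
        rcases Nat.lt_or_ge q.val i.val with h | h
        · exact h
        · exfalso
          have : q.val = i.val := by omega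
          apply hba
          rw [← hq, ← hia]
          exact congrArg s (Fin.ext this)
      -- pattern b a b a
      apply hds
      refine ⟨ep q, i, et k, last, ?_, ?_, ?_, ?_, ?_, ?_⟩
      · exact hq_lt
      · show i.val < p + k.val; omega
      · show p + k.val < n - 1; omega
      · rw [hq, hk]
      · rw [hia, ha]
      · rw [hq, hia]; exact hba
    have hsub : Finset.univ.image (s ∘ ep) ∪ Finset.univ.image (s ∘ et)
        ⊆ Finset.univ.image s := by
      intro b hb
      rw [Finset.mem_union] at hb
      rcases hb with hb | hb <;> rw [Finset.mem_image] at hb <;>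
        obtain ⟨k, -, hk⟩ := hb <;> exact hk ▸ Finset.mem_image_of_mem s (Finset.mem_univ _)
    have hcard : (Finset.univ.image (s ∘ ep)).card + (Finset.univ.image (s ∘ et)).card
        ≤ (Finset.univ.image s).card := by
      rw [← Finset.card_union_of_disjoint hdisj]
      exact Finset.card_le_card hsub
    have hcp : 1 ≤ (Finset.univ.image (s ∘ ep)).card :=
      Finset.card_pos.mpr ⟨(s ∘ ep) ⟨i.val, by omega⟩,
        Finset.mem_image_of_mem _ (Finset.mem_univ _)⟩
    have hct : 1 ≤ (Finset.univ.image (s ∘ et)).card :=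
      Finset.card_pos.mpr ⟨(s ∘ et) ⟨0, by omega⟩,
        Finset.mem_image_of_mem _ (Finset.mem_univ _)⟩
    omega
  · -- a occurs only at the last position
    rcases Nat.lt_or_ge n 2 with hn1 | hn1
    · omega
    have hnotin : ∀ j : Fin n, j.val < n - 1 → s j ≠ a := by
      intro j h1 h2
      exact hSne ⟨j, by rw [hS, Finset.mem_filter]; exact ⟨Finset.mem_univ _, h1, h2⟩⟩
    set ep : Fin (n - 1) → Fin n := fun k => ⟨k.val, by omega⟩ with hep
    have hadjp : ∀ k : Fin (n - 1), ∀ h : k.val + 1 < n - 1,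
        (s ∘ ep) k ≠ (s ∘ ep) ⟨k.val + 1, h⟩ := by
      intro k h
      exact hadj ⟨k.val, by omega⟩ (show k.val + 1 < n by omega)
    have hdsp := ds_sub s ep (fun {x y} h => h) hds
    have IHp := IH (n - 1) (by omega) (s ∘ ep) hadjp (by
      rintro ⟨x, y, z, w, h1, h2, h3, h4, h5, h6⟩
      exact hdsp ⟨x, y, z, w, h1, h2, h3, h4, h5, h6⟩)
    have hsub : Finset.univ.image (s ∘ ep) ⊆ (Finset.univ.image s).erase a := by
      intro b hb
      rw [Finset.mem_image] at hb
      obtain ⟨k, -, hk⟩ := hb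
      rw [Finset.mem_erase]
      constructor
      · rw [← hk]
        exact hnotin (ep k) k.isLt
      · exact hk ▸ Finset.mem_image_of_mem s (Finset.mem_univ _)
    have hcard : (Finset.univ.image (s ∘ ep)).card ≤ (Finset.univ.image s).card - 1 := by
      calc (Finset.univ.image (s ∘ ep)).card ≤ ((Finset.univ.image s).erase a).card :=
            Finset.card_le_card hsub
        _ = (Finset.univ.image s).card - 1 :=
            Finset.card_erase_of_mem (Finset.mem_image_of_mem s (Finset.mem_univ last))
    omega

/-- An (r,2) Davenport–Schinzel sequence over an alphabet of `r` symbols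
(no two adjacent entries equal, no subsequence `a, b, a, b` with `a ≠ b`)
has length at most `2r - 1`. -/
theorem davenport_schinzel_two {α : Type*} [Fintype α] {r n : ℕ}
    (hr : Fintype.card α = r)
    (s : Fin n → α)
    (hadj : ∀ i : Fin n, ∀ h : i.val + 1 < n, s i ≠ s ⟨i.val + 1, h⟩)
    (hds : ¬ ∃ i j k l : Fin n, i < j ∧ j < k ∧ k < l ∧
      s i = s k ∧ s j = s l ∧ s i ≠ s j) :
    n ≤ 2 * r - 1 := by
  classical
  have h := ds_key n s hadj hds
  have h2 : (Finset.univ.image s).card ≤ r := hr ▸ Finset.card_le_univ _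
  omega
end

section
/- Let P be a strictly x-monotone polygonal chain in ℝ², and let a, b be points (guards) on P and x, x' real numbers with x(a) < x(b) < x < x'. Suppose a sees a point p = (x, y) and no guard sees any point with x-coordinate x strictly below p, and b sees a point p' = (x', y'). Then a also sees p'. -/
/-- A strictly x-monotone polygonal chain is modeled as the graph of a
continuous function `T : ℝ → ℝ`; the region strictly below the chain is
`{q | q.2 < T q.1}`.  A guard `g` on the chain sees a point `p` if the
closed segment from `g` to `p` avoids the open region strictly below the
chain. -/
def Sees (T : ℝ → ℝ) (g p : ℝ × ℝ) : Prop :=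
  ∀ q ∈ segment ℝ g p, T q.1 ≤ q.2

lemma mem_segment_param (u v : ℝ × ℝ) {s : ℝ} (h0 : 0 ≤ s) (h1 : s ≤ 1) :
    ((1-s)*u.1 + s*v.1, (1-s)*u.2 + s*v.2) ∈ segment ℝ u v := by
  refine ⟨1-s, s, by linarith, h0, by ring, ?_⟩
  ext <;> simp [smul_eq_mul]

lemma sees_point {T : ℝ → ℝ} {g p : ℝ × ℝ} (h : Sees T g p) {s : ℝ}
    (h0 : 0 ≤ s) (h1 : s ≤ 1) :
    T ((1-s)*g.1 + s*p.1) ≤ (1-s)*g.2 + s*p.2 :=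
  h _ (mem_segment_param g p h0 h1)

lemma sees_sub {T : ℝ → ℝ} {g p c : ℝ × ℝ} (h : Sees T g p)
    (hc : c ∈ segment ℝ g p) : Sees T g c :=
  fun q hq => h q ((convex_segment g p).segment_subset (left_mem_segment ℝ g p) hc hq)

set_option maxHeartbeats 2000000 in
/-- Order Claim: if `x(a) < x(b) < x < x'`, guard `a` sees `p = (x,y)` and no
guard on the chain sees any point with x-coordinate `x` strictly below `p`
(so `a` owns `x` at `p`), and guard `b` sees `p' = (x',y')`, then `a` sees
`p'` as well. -/
theorem order_claim (T : ℝ → ℝ) (hT : Continuous T)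
    (a b : ℝ × ℝ) (ha : a.2 = T a.1) (hb : b.2 = T b.1)
    (x x' y y' : ℝ)
    (hx1 : a.1 < b.1) (hx2 : b.1 < x) (hx3 : x < x')
    (haSees : Sees T a (x, y))
    (hOwn : ∀ g : ℝ × ℝ, g.2 = T g.1 → ∀ y₀ < y, ¬ Sees T g (x, y₀))
    (hbSees : Sees T b (x', y')) :
    Sees T a (x', y') := by
  have hA : (0:ℝ) < x - a.1 := by linarith
  have hB : (0:ℝ) < x' - b.1 := by linarith
  have hC : (0:ℝ) < x' - a.1 := by linarith
  have hE : (0:ℝ) < b.1 - a.1 := by linarith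
  have hF : (0:ℝ) < x - b.1 := by linarith
  have hD : (0:ℝ) < x' - x := by linarith
  -- hh : height of segment a–p above b.1
  set hh : ℝ := a.2 + (b.1 - a.1) * (y - a.2) / (x - a.1) with hhh
  have hbh : b.2 ≤ hh := by
    have hs0 : 0 ≤ (b.1 - a.1)/(x - a.1) := by positivity
    have hs1 : (b.1 - a.1)/(x - a.1) ≤ 1 := by rw [div_le_one hA]; linarith
    have key := sees_point haSees hs0 hs1
    dsimp only at key
    rw [show (1 - (b.1 - a.1)/(x - a.1)) * a.1 + (b.1 - a.1)/(x - a.1) * x = b.1 by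
      field_simp; ring] at key
    calc b.2 = T b.1 := hb
    _ ≤ _ := key
    _ = hh := by rw [hhh]; field_simp; ring
  -- y₀ : height of segment b–p' above x
  set y₀ : ℝ := b.2 + (x - b.1) * (y' - b.2) / (x' - b.1) with hy₀
  have hs0 : 0 ≤ (x - b.1)/(x' - b.1) := by positivity
  have hs1 : (x - b.1)/(x' - b.1) ≤ 1 := by rw [div_le_one hB]; linarith
  have hmem : ((x:ℝ), y₀) ∈ segment ℝ b (x', y') := by
    have hm := mem_segment_param b (x', y') hs0 hs1
    dsimp only at hm
    rw [show (1 - (x - b.1)/(x' - b.1)) * b.1 + (x - b.1)/(x' - b.1) * x' = x by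
      field_simp; ring] at hm
    rw [show (1 - (x - b.1)/(x' - b.1)) * b.2 + (x - b.1)/(x' - b.1) * y' = y₀ by
      rw [hy₀]; field_simp; ring] at hm
    exact hm
  have hyy₀ : y ≤ y₀ := by
    by_contra hcon
    push_neg at hcon
    exact hOwn b hb y₀ hcon (sees_sub hbSees hmem)
  -- G : height of line b–p' above a.1 ; y₁ : height of segment a–p' above x
  set G : ℝ := b.2 + (a.1 - b.1) * (y' - b.2) / (x' - b.1) with hG
  set y₁ : ℝ := a.2 + (x - a.1) * (y' - a.2) / (x' - a.1) with hy₁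
  have I1 : (x - b.1)*(a.2 - G) = (x - a.1)*(hh - b.2) + (a.1 - b.1)*(y - y₀) := by
    rw [hG, hhh, hy₀]; field_simp; ring
  have claim1 : G ≤ a.2 := by
    by_contra hc
    push_neg at hc
    have t1 : 0 ≤ (x - a.1)*(hh - b.2) := mul_nonneg hA.le (by linarith)
    have t2 : 0 ≤ (b.1 - a.1)*(y₀ - y) := mul_nonneg hE.le (by linarith)
    have t3 : 0 < (x - b.1)*(G - a.2) := mul_pos hF (by linarith)
    linarith [I1]
  have I2 : (x' - a.1)*(y₁ - y₀) = (x' - x)*(a.2 - G) := by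
    rw [hG, hy₀, hy₁]; field_simp; ring
  have claim2 : y₀ ≤ y₁ := by
    by_contra hc
    push_neg at hc
    have t1 : 0 ≤ (x' - x)*(a.2 - G) := mul_nonneg hD.le (by linarith)
    have t3 : 0 < (x' - a.1)*(y₀ - y₁) := mul_pos hC (by linarith)
    linarith [I2]
  have Ey₁ : (x' - a.1)*(y₁ - a.2) = (x - a.1)*(y' - a.2) := by
    rw [hy₁]; field_simp; ring
  -- the main goal
  rintro q ⟨u, v, hu, hv, huv, rfl⟩
  have huv' : u = 1 - v := by linarith
  subst huv'
  simp only [Prod.fst_add, Prod.snd_add, Prod.smul_fst, Prod.smul_snd, smul_eq_mul]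
  show T ((1-v)*a.1 + v*x') ≤ (1-v)*a.2 + v*y'
  have hv1 : v ≤ 1 := by linarith
  rcases le_total ((1-v)*a.1 + v*x') x with hle | hle
  · -- use the segment a–p
    have hs0' : 0 ≤ v*(x' - a.1)/(x - a.1) := by positivity
    have hs1' : v*(x' - a.1)/(x - a.1) ≤ 1 := by
      rw [div_le_one hA]; linarith
    have key := sees_point haSees hs0' hs1'
    dsimp only at key
    rw [show (1 - v*(x' - a.1)/(x - a.1)) * a.1 + v*(x' - a.1)/(x - a.1) * x
        = (1-v)*a.1 + v*x' by field_simp; ring] at key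
    refine key.trans ?_
    -- (1-s)*a.2 + s*y ≤ (1-v)*a.2 + v*y'
    have HH : (x' - a.1)*(y - a.2) ≤ (x - a.1)*(y' - a.2) := by
      have := mul_le_mul_of_nonneg_left (show y ≤ y₁ by linarith) hC.le
      linarith [Ey₁]
    have HH2 : v*((x' - a.1)*(y - a.2)) ≤ v*((x - a.1)*(y' - a.2)) :=
      mul_le_mul_of_nonneg_left HH hv
    rw [show (1 - v*(x' - a.1)/(x - a.1)) * a.2 + v*(x' - a.1)/(x - a.1) * y
        = a.2 + v*((x' - a.1)*(y - a.2))/(x - a.1) by field_simp; ring]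
    rw [show (1-v)*a.2 + v*y' = a.2 + v*((x - a.1)*(y' - a.2))/(x - a.1) by
      field_simp; ring]
    have step := (div_le_div_iff_of_pos_right hA).mpr HH2
    linarith
  · -- use the segment b–p'
    set t : ℝ := (1-v)*a.1 + v*x' with ht
    have htx' : t ≤ x' := by
      have h9 : (1-v)*a.1 ≤ (1-v)*x' :=
        mul_le_mul_of_nonneg_left (by linarith) (by linarith)
      rw [ht]; linarith [h9]
    have hs0' : 0 ≤ (t - b.1)/(x' - b.1) := by
      apply div_nonneg _ hB.le; linarith
    have hs1' : (t - b.1)/(x' - b.1) ≤ 1 := by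
      rw [div_le_one hB]; linarith
    have key := sees_point hbSees hs0' hs1'
    dsimp only at key
    rw [show (1 - (t - b.1)/(x' - b.1)) * b.1 + (t - b.1)/(x' - b.1) * x' = t by
      field_simp; ring] at key
    refine key.trans ?_
    set W : ℝ := (1 - (t - b.1)/(x' - b.1)) * b.2 + (t - b.1)/(x' - b.1) * y' with hW
    -- interpolation identity
    have I3 : (x' - x) * (((1-v)*a.2 + v*y') - W) = ((x' - a.1) - v*(x' - a.1)) * (y₁ - y₀) := by
      rw [hW, hy₁, hy₀, ht]; field_simp; ring
    have t1 : 0 ≤ ((x' - a.1) - v*(x' - a.1)) * (y₁ - y₀) := by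
      apply mul_nonneg _ (by linarith)
      have h9 : 0 ≤ (1-v)*(x'-a.1) := mul_nonneg (by linarith) hC.le
      nlinarith [h9]
    by_contra hcc
    push_neg at hcc
    have h9 : 0 < (x' - x) * (W - ((1-v)*a.2 + v*y')) := mul_pos hD (by linarith)
    nlinarith [I3, t1, h9]
end

section
/- Let a, b, p, p' be points in the plane with x(a) < x(b) < x(p) < x(p'). Suppose b lies on or below the segment from a to p, p lies on or below the segment from b to p', and a lies on or below the segment from b to p'. Then p' lies on or above the line through a and p, i.e., the segment from a to p' does not pass below b or p. -/
/-- `OnOrBelow u v w`: the point `w` lies on or below the line through `u`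
and `v` (with `u.1 < v.1`), i.e. the y-coordinate of `w` is at most that of
the point with the same x-coordinate on the supporting line of segment `uv`. -/
def OnOrBelow (u v w : ℝ × ℝ) : Prop :=
  (w.2 - u.2) * (v.1 - u.1) ≤ (w.1 - u.1) * (v.2 - u.2)

/-- `OnOrAbove u v w`: the point `w` lies on or above the line through `u`
and `v`. -/
def OnOrAbove (u v w : ℝ × ℝ) : Prop :=
  (w.1 - u.1) * (v.2 - u.2) ≤ (w.2 - u.2) * (v.1 - u.1)

/-- Convexity core of the Order Claim: with `x(a) < x(b) < x(p) < x(p')`,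
if `b` is on or below segment `ap`, and both `p` and `a` are on or below
segment `bp'`, then `p'` is on or above the line through `a` and `p`. -/
theorem order_claim_convexity (a b p p' : ℝ × ℝ)
    (h1 : a.1 < b.1) (h2 : b.1 < p.1) (h3 : p.1 < p'.1)
    (hb : OnOrBelow a p b)
    (hp : OnOrBelow b p' p)
    (ha : OnOrBelow b p' a) :
    OnOrAbove a p p' := by
  unfold OnOrBelow OnOrAbove at *
  nlinarith [mul_pos (sub_pos.2 h1) (sub_pos.2 h2), mul_pos (sub_pos.2 h2) (sub_pos.2 h3),
    mul_le_mul_of_nonneg_left hb (le_of_lt (sub_pos.2 h3)),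
    mul_le_mul_of_nonneg_left hp (le_of_lt (sub_pos.2 h1)),
    mul_le_mul_of_nonneg_left ha (le_of_lt (sub_pos.2 h2)),
    mul_le_mul_of_nonneg_left hp (le_of_lt (sub_pos.2 (h1.trans h2))),
    mul_le_mul_of_nonneg_left ha (le_of_lt (sub_pos.2 (h2.trans h3)))]
end

section
/- Let w : S → [0,1] be weights on a finite family S of sets covering a point set M, with ∑_{s ∋ p} w(s) ≥ 1 for every p ∈ M, and let c = ∑_{s ∈ S} w(s). Form a multiset S' containing ⌈N·w(s)⌉ copies of each s, for an integer N ≥ |S|·c. Then every point p ∈ M is contained in members of S' with total multiplicity at least |S'|/(2c). -/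
open Finset

/-- LP rounding step.  Given fractional weights `w : ι → [0,1]` on a finite
family of sets `F i` covering every point of `M` with total weight at least
`1`, with `c = ∑ w`, and an integer `N ≥ |S|·c`, form the multiset with
`⌈N·w i⌉` copies of each set.  Then every point of `M` is covered with total
multiplicity at least `|S'|/(2c)`, where `|S'| = ∑ ⌈N·w i⌉`. -/
theorem lp_rounding {α : Type*} {ι : Type*} [Fintype ι] [DecidableEq ι]
    (F : ι → Set α) (M : Set α)
    (w : ι → ℝ) (hw0 : ∀ i, 0 ≤ w i) (hw1 : ∀ i, w i ≤ 1)
    (hcover : ∀ p ∈ M, ∀ (hd : DecidablePred fun i => p ∈ F i),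
      1 ≤ ∑ i ∈ univ.filter (fun i => p ∈ F i), w i)
    (c : ℝ) (hc : c = ∑ i, w i)
    (N : ℕ) (hN : (Fintype.card ι : ℝ) * c ≤ N) :
    ∀ p ∈ M, ∀ (hd : DecidablePred fun i => p ∈ F i),
      ((∑ i, ⌈(N : ℝ) * w i⌉ : ℤ) : ℝ) / (2 * c) ≤
        ((∑ i ∈ univ.filter (fun i => p ∈ F i), ⌈(N : ℝ) * w i⌉ : ℤ) : ℝ) := by
  intro p hp hd
  have hcov := hcover p hp hd
  have hc1 : 1 ≤ c := by
    rw [hc]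
    calc (1:ℝ) ≤ ∑ i ∈ univ.filter (fun i => p ∈ F i), w i := hcov
      _ ≤ ∑ i, w i :=
        Finset.sum_le_sum_of_subset_of_nonneg (filter_subset _ _)
          (fun i _ _ => hw0 i)
  have hc0 : (0:ℝ) < c := lt_of_lt_of_le one_pos hc1
  have hN0 : (0:ℝ) ≤ N := Nat.cast_nonneg N
  have h1 : ((∑ i, ⌈(N : ℝ) * w i⌉ : ℤ) : ℝ) ≤ N * c + Fintype.card ι := by
    push_cast
    calc ∑ i, (⌈(N:ℝ) * w i⌉ : ℝ) ≤ ∑ i, ((N:ℝ) * w i + 1) :=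
        Finset.sum_le_sum (fun i _ => le_of_lt (Int.ceil_lt_add_one _))
      _ = N * c + Fintype.card ι := by
        rw [Finset.sum_add_distrib, ← Finset.mul_sum, ← hc]
        simp [Finset.card_univ]
  have hcard : (Fintype.card ι : ℝ) ≤ N * c := by
    calc (Fintype.card ι : ℝ) ≤ (Fintype.card ι : ℝ) * c :=
        le_mul_of_one_le_right (Nat.cast_nonneg _) hc1
      _ ≤ N := hN
      _ ≤ N * c := le_mul_of_one_le_right hN0 hc1
  have h2 : (N:ℝ) ≤ ((∑ i ∈ univ.filter (fun i => p ∈ F i), ⌈(N : ℝ) * w i⌉ : ℤ) : ℝ) := by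
    push_cast
    calc (N:ℝ) = N * 1 := (mul_one _).symm
      _ ≤ N * ∑ i ∈ univ.filter (fun i => p ∈ F i), w i :=
        mul_le_mul_of_nonneg_left hcov hN0
      _ = ∑ i ∈ univ.filter (fun i => p ∈ F i), (N:ℝ) * w i := Finset.mul_sum _ _ _
      _ ≤ ∑ i ∈ univ.filter (fun i => p ∈ F i), (⌈(N:ℝ) * w i⌉ : ℝ) :=
        Finset.sum_le_sum (fun i _ => Int.le_ceil _)
  rw [div_le_iff₀ (by positivity)]
  calc ((∑ i, ⌈(N : ℝ) * w i⌉ : ℤ) : ℝ) ≤ N * c + Fintype.card ι := h1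
    _ ≤ N * c + N * c := by linarith
    _ = (N:ℝ) * (2 * c) := by ring
    _ ≤ _ * (2 * c) := by
      apply mul_le_mul_of_nonneg_right h2 (by positivity)
end

section
/- Let S be a family of n sets and let c ≥ 1. Suppose for every r there exists a (1/r)-net of size at most K·r for every multiset built from S. Then given a fractional cover of M of total weight c, there is a subfamily of S of size at most 2K·c covering M. -/
open Finset
open Classical in
/-- Constant-factor approximation from linear-size nets.  Suppose every
multiset version of the family `F` admits, for every `r ≥ 1`, a `(1/r)`-net
of size at most `K·r`.  Then from any fractional cover of `M` of total
weight `c ≥ 1` one obtains a subfamily of size at most `2K·c` covering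
`M`. -/
theorem cover_from_linear_nets {α : Type*} {ι : Type*} [Fintype ι]
    (F : ι → Set α) (M : Set α) (K : ℝ) (hK : 0 < K)
    (hnet : ∀ (mult : ι → ℕ) (r : ℝ), 1 ≤ r →
      ∃ T : Finset ι, (T.card : ℝ) ≤ K * r ∧
        ∀ x : α, ((∑ i, mult i : ℕ) : ℝ) / r ≤
            ((∑ i, if x ∈ F i then mult i else 0 : ℕ) : ℝ) →
          ∃ i ∈ T, x ∈ F i)
    (c : ℝ) (hc : 1 ≤ c)
    (w : ι → ℝ) (hw0 : ∀ i, 0 ≤ w i) (hw1 : ∀ i, w i ≤ 1)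
    (hwcov : ∀ p ∈ M, 1 ≤ ∑ i, if p ∈ F i then w i else 0)
    (hwtot : ∑ i, w i = c) :
    ∃ D : Finset ι, (D.card : ℝ) ≤ 2 * K * c ∧ M ⊆ ⋃ i ∈ D, F i := by
  classical
  set N : ℕ := Fintype.card ι + 1 with hN
  have hNpos : (0:ℝ) < N := by positivity
  have hNcast : (N:ℝ) = (Fintype.card ι : ℝ) + 1 := by rw [hN]; push_cast; ring
  set mult : ι → ℕ := fun i => ⌈(N : ℝ) * w i⌉₊ with hmult
  have hr : (1:ℝ) ≤ 2 * c := by linarith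
  obtain ⟨T, hTcard, hTnet⟩ := hnet mult (2 * c) hr
  -- total multiplicity is at most 2 N c
  have htot : ((∑ i, mult i : ℕ) : ℝ) ≤ 2 * N * c := by
    rw [Nat.cast_sum]
    have h1 : ∀ i, (mult i : ℝ) ≤ (N : ℝ) * w i + 1 := by
      intro i
      have := Nat.ceil_lt_add_one (a := (N:ℝ) * w i) (mul_nonneg hNpos.le (hw0 i))
      simpa [hmult] using this.le
    calc ∑ i, (mult i : ℝ) ≤ ∑ i, ((N : ℝ) * w i + 1) :=
          Finset.sum_le_sum fun i _ => h1 i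
      _ = (N : ℝ) * c + Fintype.card ι := by
          rw [Finset.sum_add_distrib, ← Finset.mul_sum, hwtot]
          simp [Finset.card_univ]
      _ ≤ (N : ℝ) * c + N := by
          have : (Fintype.card ι : ℝ) ≤ N := by
            simp only [hN]; push_cast; linarith
          linarith
      _ ≤ 2 * N * c := by rw [hNcast]; nlinarith
  refine ⟨T, ?_, ?_⟩
  · calc (T.card : ℝ) ≤ K * (2 * c) := hTcard
      _ = 2 * K * c := by ring
  · intro p hp
    have hpt : (N : ℝ) ≤ ((∑ i, if p ∈ F i then mult i else 0 : ℕ) : ℝ) := by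
      simp only [Nat.cast_sum, apply_ite (Nat.cast : ℕ → ℝ), Nat.cast_zero]
      have h2 : ∀ i, (N : ℝ) * (if p ∈ F i then w i else 0) ≤
          (if p ∈ F i then (mult i : ℝ) else 0) := by
        intro i
        by_cases h : p ∈ F i
        · simp only [h, if_true, hmult]
          exact Nat.le_ceil _
        · simp [h]
      calc (N : ℝ) = (N : ℝ) * 1 := by ring
        _ ≤ (N : ℝ) * ∑ i, (if p ∈ F i then w i else 0) := by
            have := hwcov p hp
            nlinarith
        _ = ∑ i, (N : ℝ) * (if p ∈ F i then w i else 0) := by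
            rw [Finset.mul_sum]
        _ ≤ ∑ i, (if p ∈ F i then (mult i : ℝ) else 0) :=
            Finset.sum_le_sum fun i _ => h2 i
    have hcond : ((∑ i, mult i : ℕ) : ℝ) / (2 * c) ≤
        ((∑ i, if p ∈ F i then mult i else 0 : ℕ) : ℝ) := by
      rw [div_le_iff₀ (by linarith)]
      calc ((∑ i, mult i : ℕ) : ℝ) ≤ 2 * N * c := htot
        _ = (N : ℝ) * (2 * c) := by ring
        _ ≤ _ := by
            apply mul_le_mul_of_nonneg_right hpt (by linarith)
    obtain ⟨i, hiT, hpi⟩ := hTnet p hcond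
    exact Set.mem_biUnion hiT hpi
end
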